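/- For any lattice L, there is a complete embedding of L into a complete Boolean algebra (an embedding preserving all existing joins and meets) if and only if L satisfies the join-infinite distributive law (JID) and the meet-infinite distributive law (MID). -/

import Mathlib

/-!
A complete embedding `e : L → B` transfers JID and MID from `B`, which is a frame and a coframe,
back to `L`, because `e` reflects the order.

Conversely, JID makes `L` distributive. Send `a` to the set of prime filters containing it, and
give the prime filters the patch topology generated by these sets and their complements. They
are clopen, hence regular open, and the regular open sets form a complete Boolean algebra. In it,
meets are interiors of intersections, and joins are interiors of closures of unions. Every
neighbourhood of a point `P` contains a basic one, `{Q | a ∈ Q, b ∉ Q}` with `a ∈ P` and `b ∉ P`.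
Tested on these basic sets, JID says that the image of `⋁ S` lies in the closure of the union of
the images of `S`. Dually, MID says that the interior of the intersection of the images of `S`
lies in the image of `⋀ S`.
-/

universe u

open Set TopologicalSpace

section Forward

variable {L B : Type*} [Lattice L]

theorem le_of_map_le_of_injective [SemilatticeInf B] (e : InfHom L B) (he : Function.Injective e)
    {x y : L} (h : e x ≤ e y) : x ≤ y :=
  inf_eq_left.1 <| he <| by rw [map_inf, inf_eq_left.2 h]

theorem isLUB_inf_image_of_injective [Order.Frame B] (e : InfHom L B) (he : Function.Injective e)
    {S : Set L} {m : L} (hm : IsLUB S m) (he_m : e m = sSup (e '' S)) (a : L) :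
    IsLUB ((a ⊓ ·) '' S) (a ⊓ m) := by
  refine ⟨forall_mem_image.2 fun s hs => inf_le_inf_left a (hm.1 hs), fun u hu => ?_⟩
  refine le_of_map_le_of_injective e he ?_
  calc e (a ⊓ m) = ⨆ b ∈ e '' S, e a ⊓ b := by rw [map_inf, he_m, inf_sSup_eq]
    _ ≤ e u := iSup₂_le <| forall_mem_image.2 fun s hs => by
        rw [← map_inf]
        exact OrderHomClass.mono e (hu (mem_image_of_mem _ hs))

theorem isGLB_sup_image_of_injective [Order.Coframe B] (e : SupHom L B) (he : Function.Injective e)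
    {S : Set L} {m : L} (hm : IsGLB S m) (he_m : e m = sInf (e '' S)) (a : L) :
    IsGLB ((a ⊔ ·) '' S) (a ⊔ m) :=
  isLUB_inf_image_of_injective (L := Lᵒᵈ) (B := Bᵒᵈ) (SupHom.dual e) he hm he_m a

end Forward

namespace Heyting.Regular

variable {α : Type*} [Order.Frame α]

instance : CompleteBooleanAlgebra (Regular α) :=
  { (inferInstance : BooleanAlgebra (Regular α)), gi.liftCompleteLattice with }

theorem isLUB_of_forall_disjoint {S : Set (Regular α)} {x : Regular α} (hx : x ∈ upperBounds S)
    (h : ∀ w : α, (∀ s ∈ S, Disjoint w s) → Disjoint w x) : IsLUB S x := by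
  refine ⟨hx, fun y hy => coe_le_coe.1 ?_⟩
  rw [← y.prop.eq, le_compl_iff_disjoint_right]
  exact (h _ fun s hs => disjoint_compl_left.mono_right (coe_le_coe.2 (hy hs))).symm

end Heyting.Regular

theorem TopologicalSpace.Opens.isRegular_of_isClosed {X : Type*} [TopologicalSpace X]
    {V : Opens X} (hV : IsClosed (V : Set X)) : Heyting.IsRegular V :=
  Opens.ext <| by
    rw [Opens.coe_compl_eq_interior_compl, Opens.coe_compl_eq_interior_compl,
      hV.isOpen_compl.interior_eq, _root_.compl_compl]
    exact V.isOpen.interior_eq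

namespace Order.Ideal.PrimePair

variable {L : Type*} [DistribLattice L]

def stoneSet (a : L) : Set (PrimePair L) := {P | a ∈ P.F}

theorem notMem_stoneSet {a : L} {P : PrimePair L} : P ∉ stoneSet a ↔ a ∈ P.I := by
  rw [← SetLike.mem_coe, ← P.compl_F_eq_I]
  rfl

theorem stoneSet_inf (a b : L) : stoneSet (a ⊓ b) = stoneSet a ∩ stoneSet b :=
  Set.ext fun P => PFilter.inf_mem_iff (F := P.F)

theorem stoneSet_sup (a b : L) : stoneSet (a ⊔ b) = stoneSet a ∪ stoneSet b :=
  Set.ext fun P =>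
    not_iff_not.1 (by simpa only [mem_union, not_or, notMem_stoneSet] using sup_mem_iff)

theorem exists_mem_stoneSet_notMem_stoneSet {a b : L} (h : ¬a ≤ b) :
    ∃ P : PrimePair L, P ∈ stoneSet a ∧ P ∉ stoneSet b := by
  have hdisj : Disjoint (PFilter.principal a : Set L) (principal b : Set L) :=
    disjoint_left.2 fun x hax hxb => h (le_trans hax hxb)
  obtain ⟨J, hJ, hbJ, haJ⟩ := DistribLattice.prime_ideal_of_disjoint_filter_ideal hdisj
  exact ⟨hJ.toPrimePair, fun ha => disjoint_left.1 haJ (PFilter.mem_principal.2 le_rfl) ha,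
    notMem_stoneSet.2 (hbJ mem_principal_self)⟩

theorem stoneSet_subset_stoneSet {a b : L} : stoneSet a ⊆ stoneSet b ↔ a ≤ b := by
  refine ⟨fun h => ?_, fun h P ha => P.F.mem_of_le h ha⟩
  by_contra hab
  obtain ⟨P, ha, hb⟩ := exists_mem_stoneSet_notMem_stoneSet hab
  exact hb (h ha)

instance : TopologicalSpace (PrimePair L) :=
  generateFrom (range stoneSet ∪ range fun a => (stoneSet a)ᶜ)

theorem isClopen_stoneSet (a : L) : IsClopen (stoneSet a) :=
  ⟨isOpen_compl_iff.1 <| isOpen_generateFrom_of_mem <| .inr ⟨a, rfl⟩,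
    isOpen_generateFrom_of_mem <| .inl ⟨a, rfl⟩⟩

theorem exists_stoneSet_inter_compl_subset {W : Set (PrimePair L)} (hW : IsOpen W)
    {P : PrimePair L} (hP : P ∈ W) :
    ∃ a ∈ P.F, ∃ b ∈ P.I, stoneSet a ∩ (stoneSet b)ᶜ ⊆ W := by
  -- Nonemptiness of `P.F` and `P.I` fills in a missing side, so `L` needs no `⊤` or `⊥`.
  induction hW generalizing P with
  | basic s hs =>
    obtain ⟨a, ha⟩ := P.F.nonempty
    obtain ⟨b, hb⟩ := P.I.nonempty
    rcases hs with ⟨c, rfl⟩ | ⟨c, rfl⟩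
    · exact ⟨c, hP, b, hb, inter_subset_left⟩
    · exact ⟨a, ha, c, notMem_stoneSet.1 hP, inter_subset_right⟩
  | univ =>
    obtain ⟨a, ha⟩ := P.F.nonempty
    obtain ⟨b, hb⟩ := P.I.nonempty
    exact ⟨a, ha, b, hb, subset_univ _⟩
  | inter s t _ _ ihs iht =>
    obtain ⟨a, ha, b, hb, hs⟩ := ihs hP.1
    obtain ⟨a', ha', b', hb', ht⟩ := iht hP.2
    refine ⟨a ⊓ a', P.F.inf_mem ha ha', b ⊔ b', sup_mem hb hb', ?_⟩
    rw [stoneSet_inf, stoneSet_sup, compl_union]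
    exact subset_inter (fun Q hQ => hs ⟨hQ.1.1, hQ.2.1⟩) fun Q hQ => ht ⟨hQ.1.2, hQ.2.2⟩
  | sUnion S _ ih =>
    obtain ⟨s, hs, hPs⟩ := hP
    obtain ⟨a, ha, b, hb, h⟩ := ih s hs hPs
    exact ⟨a, ha, b, hb, h.trans (subset_sUnion_of_mem hs)⟩

theorem disjoint_stoneSet_of_isLUB {S : Set L} {m : L}
    (hJID : ∀ a, IsLUB ((a ⊓ ·) '' S) (a ⊓ m)) {W : Set (PrimePair L)} (hW : IsOpen W)
    (hS : ∀ s ∈ S, Disjoint W (stoneSet s)) : Disjoint W (stoneSet m) := by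
  refine disjoint_left.2 fun P hPW hPm => ?_
  obtain ⟨a, ha, b, hb, hab⟩ := exists_stoneSet_inter_compl_subset hW hPW
  have hamb : a ⊓ m ≤ b := (hJID a).2 <| forall_mem_image.2 fun s hs =>
    stoneSet_subset_stoneSet.1 fun Q hQ => by
      rw [stoneSet_inf] at hQ
      by_contra hQb
      exact disjoint_left.1 (hS s hs) (hab ⟨hQ.1, hQb⟩) hQ.2
  exact notMem_stoneSet.2 hb (stoneSet_subset_stoneSet.2 hamb (P.F.inf_mem ha hPm))

theorem subset_stoneSet_of_isGLB {S : Set L} {m : L}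
    (hMID : ∀ a, IsGLB ((a ⊔ ·) '' S) (a ⊔ m)) {W : Set (PrimePair L)} (hW : IsOpen W)
    (hS : ∀ s ∈ S, W ⊆ stoneSet s) : W ⊆ stoneSet m := by
  intro P hPW
  obtain ⟨a, ha, b, hb, hab⟩ := exists_stoneSet_inter_compl_subset hW hPW
  have habm : a ≤ b ⊔ m := (hMID b).2 <| forall_mem_image.2 fun s hs =>
    stoneSet_subset_stoneSet.1 fun Q hQ => by
      rw [stoneSet_sup]
      exact or_iff_not_imp_left.2 fun hQb => hS s hs (hab ⟨hQ, hQb⟩)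
  have hP : P ∈ stoneSet (b ⊔ m) := stoneSet_subset_stoneSet.2 habm ha
  rw [stoneSet_sup] at hP
  exact hP.resolve_left (notMem_stoneSet.2 hb)

open Heyting

def stoneEmbedding : L ↪o Regular (Opens (PrimePair L)) :=
  OrderEmbedding.ofMapLEIff
    (fun a => ⟨⟨stoneSet a, (isClopen_stoneSet a).isOpen⟩,
      Opens.isRegular_of_isClosed (isClopen_stoneSet a).isClosed⟩)
    fun _ _ => stoneSet_subset_stoneSet

theorem stoneEmbedding_inf (a b : L) :
    stoneEmbedding (a ⊓ b) = stoneEmbedding a ⊓ stoneEmbedding b :=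
  Regular.coe_injective <| Opens.ext <| stoneSet_inf a b

theorem stoneEmbedding_sup (a b : L) :
    stoneEmbedding (a ⊔ b) = stoneEmbedding a ⊔ stoneEmbedding b := by
  refine Regular.coe_injective ?_
  rw [Regular.coe_sup, ← (stoneEmbedding (a ⊔ b)).prop.eq]
  congr 2
  exact Opens.ext <| stoneSet_sup a b

theorem stoneEmbedding_of_isLUB {S : Set L} {m : L} (hm : IsLUB S m)
    (hJID : ∀ a, IsLUB ((a ⊓ ·) '' S) (a ⊓ m)) :
    stoneEmbedding m = sSup (stoneEmbedding '' S) := by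
  refine (Regular.isLUB_of_forall_disjoint ?_ fun W hW => ?_).unique (isLUB_sSup _)
  · exact forall_mem_image.2 fun s hs => stoneEmbedding.monotone (hm.1 hs)
  · refine Opens.coe_disjoint.1 <| disjoint_stoneSet_of_isLUB hJID W.isOpen fun s hs => ?_
    exact Opens.coe_disjoint.2 <| hW _ (mem_image_of_mem _ hs)

theorem stoneEmbedding_of_isGLB {S : Set L} {m : L} (hm : IsGLB S m)
    (hMID : ∀ a, IsGLB ((a ⊔ ·) '' S) (a ⊔ m)) :
    stoneEmbedding m = sInf (stoneEmbedding '' S) := by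
  refine IsGLB.unique ⟨?_, fun W hW => ?_⟩ (isGLB_sInf _)
  · exact forall_mem_image.2 fun s hs => stoneEmbedding.monotone (hm.1 hs)
  · exact subset_stoneSet_of_isGLB hMID W.1.isOpen fun s hs => hW (mem_image_of_mem _ hs)

end Order.Ideal.PrimePair

abbrev DistribLattice.ofJID {L : Type*} [Lattice L]
    (hJID : ∀ (S : Set L) (m a : L), IsLUB S m → IsLUB ((a ⊓ ·) '' S) (a ⊓ m)) :
    DistribLattice L :=
  DistribLattice.ofInfSupLe fun a b c =>
    (hJID {b, c} (b ⊔ c) a isLUB_pair).2 <| by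
      rintro _ ⟨s, rfl | rfl, rfl⟩
      exacts [le_sup_left, le_sup_right]

/-- Funayama's theorem: a lattice `L` admits a complete
embedding (an injective lattice homomorphism preserving all existing joins and
meets) into a complete Boolean algebra iff `L` satisfies the join-infinite
distributive law (JID) and the meet-infinite distributive law (MID). -/
theorem funayama (L : Type u) [Lattice L] :
    (∃ (B : Type u) (inst : CompleteBooleanAlgebra B) (e : L → B),
      Function.Injective e ∧
      (∀ a b : L, e (a ⊓ b) = inst.inf (e a) (e b)) ∧
      (∀ a b : L, e (a ⊔ b) = inst.sup (e a) (e b)) ∧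
      (∀ (S : Set L) (m : L), IsLUB S m → e m = inst.sSup (e '' S)) ∧
      (∀ (S : Set L) (m : L), IsGLB S m → e m = inst.sInf (e '' S)))
    ↔
    ((∀ (S : Set L) (m a : L), IsLUB S m → IsLUB ((fun s => a ⊓ s) '' S) (a ⊓ m)) ∧
     (∀ (S : Set L) (m a : L), IsGLB S m → IsGLB ((fun s => a ⊔ s) '' S) (a ⊔ m))) := by
  constructor
  · rintro ⟨B, inst, e, he, he_inf, he_sup, he_sSup, he_sInf⟩
    exact ⟨fun S m a hm => isLUB_inf_image_of_injective ⟨e, he_inf⟩ he hm (he_sSup S m hm) a,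
      fun S m a hm => isGLB_sup_image_of_injective ⟨e, he_sup⟩ he hm (he_sInf S m hm) a⟩
  · rintro ⟨hJID, hMID⟩
    let _ : DistribLattice L := DistribLattice.ofJID hJID
    open Order.Ideal.PrimePair in
    exact ⟨_, inferInstance, stoneEmbedding, stoneEmbedding.injective, stoneEmbedding_inf,
      stoneEmbedding_sup, fun S m hm => stoneEmbedding_of_isLUB hm fun a => hJID S m a hm,
      fun S m hm => stoneEmbedding_of_isGLB hm fun a => hMID S m a hm⟩
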